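/- Let p = p(M, δ) < 1/2 be the optimal failure probability for the atomic distinguishing problem. Then for uniformly random z ∈ {0,1}^B, any algorithm that receives M samples from D_z and outputs ẑ ∈ {0,1}^* satisfies E[d_edit(z, ẑ)] ≥ c'·B·p/log(1/p) for some absolute constant c' > 0. -/

import Mathlib

/-!
At each coordinate the maximum-likelihood guess from the `M` samples fails with probability at
least `p`, i.e. the pointwise maximum of the two sample densities has total mass at most
`2 (1 - p)`. Hence any rule that outputs a list of `K` candidates for `z` contains `z` with
probability at most `K (1 - p) ^ B`. The strings at edit distance at most `R` from the output `ẑ`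
form such a list: each is an interleaving of a length-`(B - R)` sublist of `ẑ` with `R` free
letters, so `K ≤ C(B + R, B - R) C(B, R) 2 ^ R`, which is at most `exp (p B / 2)` for
`R = ⌊p B / (1024 log (1 / p))⌋`. So `d_edit(z, ẑ) > R` with probability at least
`1 - exp (-p B / 2)`, and Markov's inequality gives the bound with `c' = 1 / 2048`.
-/

open Classical

/-- Binomial probability: Pr[Bin(n,p) = k]. -/
noncomputable def binomP (n : ℕ) (p : ℝ) (k : ℕ) : ℝ :=
  (n.choose k : ℝ) * p ^ k * (1 - p) ^ (n - k)

/-- The pair distribution D_b on ℕ × ℕ. -/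
noncomputable def atomD (δ : ℝ) (M : ℕ) (b : Bool) (s : ℕ × ℕ) : ℝ :=
  if b then binomP (M + 1) (1 - δ) s.1 * binomP M (1 - δ) s.2
  else binomP M (1 - δ) s.1 * binomP (M + 1) (1 - δ) s.2

/-- Failure probability of an M-sample distinguishing algorithm (uniform prior). -/
noncomputable def failProb (δ : ℝ) (M : ℕ) (A : (Fin M → ℕ × ℕ) → Bool) : ℝ :=
  (1 / 2) * ∑' s : Fin M → ℕ × ℕ,
    ((if A s = true then ∏ m, atomD δ M false (s m) else 0)
      + (if A s = false then ∏ m, atomD δ M true (s m) else 0))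

/-- Length of a longest common subsequence of two boolean strings. -/
noncomputable def lcsLen (u v : List Bool) : ℕ :=
  Nat.findGreatest
    (fun k => ∃ w : List Bool, w.length = k ∧ w.Sublist u ∧ w.Sublist v)
    (min u.length v.length)

/-- Edit distance (insertions/deletions): |u| + |v| - 2·|LCS(u,v)|. -/
noncomputable def editDist (u v : List Bool) : ℕ :=
  u.length + v.length - 2 * lcsLen u v

open Finset Real

theorem binomP_nonneg {n : ℕ} {q : ℝ} (hq0 : 0 ≤ q) (hq1 : q ≤ 1) (k : ℕ) :
    0 ≤ binomP n q k := by
  have : 0 ≤ 1 - q := by linarith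
  unfold binomP; positivity

theorem binomP_eq_zero_of_lt {n k : ℕ} (q : ℝ) (h : n < k) : binomP n q k = 0 := by
  simp [binomP, Nat.choose_eq_zero_of_lt h]

theorem sum_range_binomP (n : ℕ) (q : ℝ) : ∑ k ∈ range (n + 1), binomP n q k = 1 := by
  have := (add_pow q (1 - q) n).symm
  simp only [add_sub_cancel, one_pow] at this
  rw [← this]
  exact sum_congr rfl fun k _ => by unfold binomP; ring

theorem prod_eq_zero_of_notMem_piFinset {ι X R : Type*} [Fintype ι] [DecidableEq ι]
    [CommMonoidWithZero R] {S : Finset X} {f : ι → X → R} (hf : ∀ i, ∀ x ∉ S, f i x = 0)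
    {s : ι → X} (hs : s ∉ Fintype.piFinset fun _ => S) : ∏ i, f i (s i) = 0 := by
  obtain ⟨i, hi⟩ := not_forall.1 (Fintype.mem_piFinset.not.1 hs)
  exact prod_eq_zero (mem_univ i) (hf i _ hi)

def atomBox (M : ℕ) : Finset (ℕ × ℕ) := range (M + 2) ×ˢ range (M + 2)

noncomputable def sampleD (δ : ℝ) (M : ℕ) (b : Bool) (s : Fin M → ℕ × ℕ) : ℝ :=
  ∏ m, atomD δ M b (s m)

def sampleBox (M : ℕ) : Finset (Fin M → ℕ × ℕ) := Fintype.piFinset fun _ => atomBox M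

section Atom

variable {δ : ℝ} {M : ℕ}

theorem atomD_nonneg (hδ0 : 0 ≤ δ) (hδ1 : δ ≤ 1) (b : Bool) (s : ℕ × ℕ) :
    0 ≤ atomD δ M b s := by
  have h (n k : ℕ) : 0 ≤ binomP n (1 - δ) k := binomP_nonneg (by linarith) (by linarith) k
  unfold atomD
  split <;> exact mul_nonneg (h _ _) (h _ _)

theorem atomD_eq_zero_of_notMem {s : ℕ × ℕ} (hs : s ∉ atomBox M) (b : Bool) :
    atomD δ M b s = 0 := by
  simp only [atomBox, mem_product, mem_range, not_and_or, not_lt] at hs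
  have hk (k : ℕ) (hk : M + 2 ≤ k) :
      binomP M (1 - δ) k = 0 ∧ binomP (M + 1) (1 - δ) k = 0 :=
    ⟨binomP_eq_zero_of_lt _ (by omega), binomP_eq_zero_of_lt _ (by omega)⟩
  rcases hs with h | h <;> cases b <;> simp [atomD, hk _ h]

theorem sum_atomBox_atomD (b : Bool) : ∑ s ∈ atomBox M, atomD δ M b s = 1 := by
  have h : ∑ k ∈ range (M + 2), binomP M (1 - δ) k = 1 := by
    rw [sum_range_succ, binomP_eq_zero_of_lt _ (by omega), add_zero, sum_range_binomP]
  have h' : ∑ k ∈ range (M + 2), binomP (M + 1) (1 - δ) k = 1 := sum_range_binomP _ _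
  cases b <;> simp [atomBox, atomD, sum_product, ← mul_sum, h, h']

theorem sampleD_nonneg (hδ0 : 0 ≤ δ) (hδ1 : δ ≤ 1) (b : Bool) (s : Fin M → ℕ × ℕ) :
    0 ≤ sampleD δ M b s :=
  prod_nonneg fun m _ => atomD_nonneg hδ0 hδ1 b (s m)

theorem sampleD_eq_zero_of_notMem {s : Fin M → ℕ × ℕ} (hs : s ∉ sampleBox M) (b : Bool) :
    sampleD δ M b s = 0 :=
  prod_eq_zero_of_notMem_piFinset (fun _ _ hx => atomD_eq_zero_of_notMem hx b) hs

theorem sum_sampleBox_sampleD (b : Bool) : ∑ s ∈ sampleBox M, sampleD δ M b s = 1 := by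
  simp [sampleBox, sampleD, ← prod_univ_sum, sum_atomBox_atomD]

theorem two_mul_failProb_eq_sum_min :
    2 * failProb δ M (fun s => decide (sampleD δ M false s ≤ sampleD δ M true s)) =
      ∑ s ∈ sampleBox M, min (sampleD δ M false s) (sampleD δ M true s) := by
  rw [failProb, ← mul_assoc, mul_one_div_cancel two_ne_zero, one_mul,
    tsum_eq_sum (s := sampleBox M) fun s hs => by
      simp [← sampleD.eq_1, sampleD_eq_zero_of_notMem hs]]
  refine sum_congr rfl fun s _ => ?_
  by_cases h : sampleD δ M false s ≤ sampleD δ M true s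
  · simp [← sampleD.eq_1, h]
  · simp [← sampleD.eq_1, h, (not_le.1 h).le]

theorem sum_max_sampleD_le {p : ℝ}
    (hp : ∀ A : (Fin M → ℕ × ℕ) → Bool, p ≤ failProb δ M A) :
    ∑ s ∈ sampleBox M, max (sampleD δ M false s) (sampleD δ M true s) ≤ 2 * (1 - p) := by
  have h := (sum_congr rfl fun s _ => max_add_min (sampleD δ M false s) (sampleD δ M true s) :
    ∑ s ∈ sampleBox M, _ = _)
  rw [sum_add_distrib, sum_add_distrib, sum_sampleBox_sampleD, sum_sampleBox_sampleD,
    ← two_mul_failProb_eq_sum_min] at h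
  linarith [hp fun s => decide (sampleD δ M false s ≤ sampleD δ M true s)]

theorem tsum_prod_prod_atomD_mul {B : ℕ} (z : Fin B → Bool)
    (g : (Fin M → Fin B → ℕ × ℕ) → ℝ) :
    ∑' s : Fin M → Fin B → ℕ × ℕ, (∏ m, ∏ b, atomD δ M (z b) (s m b)) * g s =
      ∑ s ∈ Fintype.piFinset fun _ : Fin B => sampleBox M,
        (∏ b, sampleD δ M (z b) (s b)) * g fun m b => s b m := by
  rw [← (Equiv.piComm fun (_ : Fin B) (_ : Fin M) => ℕ × ℕ).tsum_eq]
  have hprod (s : Fin B → Fin M → ℕ × ℕ) :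
      ∏ m, ∏ b, atomD δ M (z b) (s b m) = ∏ b, sampleD δ M (z b) (s b) := prod_comm
  simp only [Equiv.piComm_apply, Function.swap, hprod]
  exact tsum_eq_sum fun s hs => by
    rw [prod_eq_zero_of_notMem_piFinset (fun b _ hx => sampleD_eq_zero_of_notMem hx (z b)) hs,
      zero_mul]

end Atom

theorem exists_sublist_length_eq_lcsLen (u v : List Bool) :
    ∃ w : List Bool, w.length = lcsLen u v ∧ w.Sublist u ∧ w.Sublist v :=
  Nat.findGreatest_spec
    (P := fun k => ∃ w : List Bool, w.length = k ∧ w.Sublist u ∧ w.Sublist v) (Nat.zero_le _)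
    ⟨[], rfl, List.nil_sublist u, List.nil_sublist v⟩

theorem exists_common_sublist_of_editDist_le {u v : List Bool} {R : ℕ}
    (h : editDist u v ≤ R) :
    ∃ w : List Bool, w.Sublist u ∧ w.Sublist v ∧
      u.length ≤ w.length + R ∧ v.length ≤ w.length + R := by
  obtain ⟨w, hw, hwu, hwv⟩ := exists_sublist_length_eq_lcsLen u v
  have := hwu.length_le
  have := hwv.length_le
  exact ⟨w, hwu, hwv, by unfold editDist at h; omega, by unfold editDist at h; omega⟩

def interleave : List Bool → List Bool → List Bool → List Bool
  | [], _, _ => []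
  | true :: m, e, w => e.headI :: interleave m e.tail w
  | false :: m, e, w => w.headI :: interleave m e w.tail

theorem exists_interleave_eq_of_sublist {w u : List Bool} (h : w.Sublist u) :
    ∃ m e : List Bool, m.length = u.length ∧ m.count true = e.length ∧
      e.length + w.length = u.length ∧ interleave m e w = u := by
  induction h with
  | slnil => exact ⟨[], [], rfl, rfl, rfl, rfl⟩
  | cons a _ ih =>
    obtain ⟨m, e, hm, hc, he, rfl⟩ := ih
    exact ⟨true :: m, a :: e, by simp [hm], by simp [hc], by simp; omega, rfl⟩
  | cons_cons a _ ih =>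
    obtain ⟨m, e, hm, hc, he, rfl⟩ := ih
    exact ⟨false :: m, e, by simp [hm], by simpa using hc, by simp; omega, rfl⟩

theorem List.exists_ofFn_eq {α : Type*} {l : List α} {n : ℕ} (h : l.length = n) :
    ∃ f : Fin n → α, List.ofFn f = l := by
  subst h
  exact ⟨l.get, List.ofFn_get l⟩

theorem List.exists_finset_ofFn_decide_mem_eq {m : List Bool} {n : ℕ} (h : m.length = n) :
    ∃ S : Finset (Fin n), #S = m.count true ∧ List.ofFn (fun i => decide (i ∈ S)) = m := by
  subst h
  refine ⟨univ.filter fun i => m.get i = true,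
    Fin.card_filter_univ_eq_vector_get_eq_count true ⟨m, rfl⟩, ?_⟩
  simp

theorem exists_interleave_eq_ofFn_of_editDist_le {v : List Bool} {B R : ℕ} {z : Fin B → Bool}
    (hRB : R ≤ B) (h : editDist (List.ofFn z) v ≤ R) :
    ∃ (w : List Bool) (S : Finset (Fin B)) (e : Fin R → Bool), w.Sublist v ∧
      w.length = B - R ∧ #S = R ∧
      interleave (List.ofFn fun i => decide (i ∈ S)) (List.ofFn e) w = List.ofFn z := by
  obtain ⟨w, hw, hwz, hwv⟩ : ∃ w : List Bool,
      w.length = B - R ∧ w.Sublist (List.ofFn z) ∧ w.Sublist v := by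
    obtain ⟨w₀, hwz, hwv, hlen, -⟩ := exists_common_sublist_of_editDist_le h
    simp only [List.length_ofFn] at hlen
    exact ⟨w₀.take (B - R), by simp; omega, (w₀.take_sublist _).trans hwz,
      (w₀.take_sublist _).trans hwv⟩
  obtain ⟨m, e, hm, hme, he, hint⟩ := exists_interleave_eq_of_sublist hwz
  simp only [List.length_ofFn] at hm he
  obtain ⟨f, rfl⟩ := List.exists_ofFn_eq (show e.length = R by omega)
  obtain ⟨S, hS, rfl⟩ := List.exists_finset_ofFn_decide_mem_eq hm
  exact ⟨w, S, f, hwv, hw, by rw [hS, hme]; simp, hint⟩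

theorem card_editBall_le (v : List Bool) {B R : ℕ} (hRB : R ≤ B) :
    #{z : Fin B → Bool | editDist (List.ofFn z) v ≤ R} ≤
      (B + R).choose (B - R) * B.choose R * 2 ^ R := by
  set ball := ({z : Fin B → Bool | editDist (List.ofFn z) v ≤ R} : Finset _)
  rcases ball.eq_empty_or_nonempty with hball | ⟨z₀, hz₀⟩
  · simp [hball]
  have hv : v.length ≤ B + R := by
    obtain ⟨w, hwz, -, -, hwv⟩ := exists_common_sublist_of_editDist_le (mem_filter.1 hz₀).2
    have := hwz.length_le
    simp only [List.length_ofFn] at this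
    omega
  let D := (v.sublistsLen (B - R)).toFinset ×ˢ (univ : Finset (Fin B)).powersetCard R ×ˢ
    (univ : Finset (Fin R → Bool))
  let decode (x : List Bool × Finset (Fin B) × (Fin R → Bool)) : List Bool :=
    interleave (List.ofFn fun i => decide (i ∈ x.2.1)) (List.ofFn x.2.2) x.1
  have hcover : ball.image List.ofFn ⊆ D.image decode := by
    intro u hu
    obtain ⟨z, hz, rfl⟩ := mem_image.1 hu
    obtain ⟨w, S, e, hwv, hw, hS, hint⟩ :=
      exists_interleave_eq_ofFn_of_editDist_le hRB (mem_filter.1 hz).2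
    refine mem_image.2 ⟨(w, S, e), ?_, hint⟩
    simp [D, List.mem_sublistsLen, hwv, hw, hS]
  calc #ball = #(ball.image List.ofFn) :=
        (card_image_of_injective _ List.ofFn_injective).symm
    _ ≤ #(D.image decode) := card_le_card hcover
    _ ≤ #D := card_image_le
    _ ≤ (B + R).choose (B - R) * B.choose R * 2 ^ R := by
      simp only [D, card_product, card_powersetCard, card_univ, Fintype.card_fin,
        Fintype.card_fun, Fintype.card_bool, mul_assoc]
      gcongr
      calc _ ≤ (v.sublistsLen (B - R)).length := List.toFinset_card_le _
        _ = v.length.choose (B - R) := List.length_sublistsLen _ _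
        _ ≤ _ := Nat.choose_le_choose _ hv

theorem Nat.choose_le_exp_one_mul_div_pow (n k : ℕ) :
    (n.choose k : ℝ) ≤ (exp 1 * n / k) ^ k := by
  rcases k.eq_zero_or_pos with rfl | hk
  · simp
  have hk' : (0 : ℝ) < k := by exact_mod_cast hk
  have hfact : (k : ℝ) ^ k / k.factorial ≤ exp 1 ^ k := by
    rw [← exp_nat_mul, mul_one]; exact pow_div_factorial_le_exp _ hk'.le k
  calc (n.choose k : ℝ) ≤ (n : ℝ) ^ k / k.factorial := Nat.choose_le_pow_div k n
    _ = (n / k : ℝ) ^ k * ((k : ℝ) ^ k / k.factorial) := by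
      rw [div_pow]; field_simp
    _ ≤ (n / k : ℝ) ^ k * exp 1 ^ k := by gcongr
    _ = (exp 1 * n / k) ^ k := by rw [← mul_pow]; ring

theorem choose_mul_choose_mul_two_pow_le {B R : ℕ} (hR : 1 ≤ R) (hRB : R ≤ B) :
    ((B + R).choose (B - R) * B.choose R * 2 ^ R : ℝ) ≤ ((exp 1 * B / R) ^ R) ^ 4 := by
  have hR' : (0 : ℝ) < R := by exact_mod_cast hR
  have hRB' : (R : ℝ) ≤ B := by exact_mod_cast hRB
  have he : (2 : ℝ) ≤ exp 1 := by linarith [add_one_le_exp (1 : ℝ)]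
  have hy : (2 : ℝ) ≤ exp 1 * B / R := by
    rw [le_div_iff₀ hR']; nlinarith
  have h1 : ((B + R).choose (B - R) : ℝ) ≤ (exp 1 * B / R) ^ (2 * R) := by
    rw [Nat.choose_symm_of_eq_add (by omega : B + R = (B - R) + 2 * R)]
    refine (Nat.choose_le_exp_one_mul_div_pow _ _).trans
      (pow_le_pow_left₀ (by positivity) ?_ _)
    push_cast
    rw [div_le_div_iff₀ (by positivity) hR']
    nlinarith [mul_nonneg (mul_nonneg (exp_pos 1).le hR'.le) (sub_nonneg.2 hRB')]
  have h2 : (B.choose R : ℝ) ≤ (exp 1 * B / R) ^ R := Nat.choose_le_exp_one_mul_div_pow B R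
  have h3 : (2 : ℝ) ^ R ≤ (exp 1 * B / R) ^ R := pow_le_pow_left₀ (by norm_num) hy R
  calc ((B + R).choose (B - R) * B.choose R * 2 ^ R : ℝ)
      ≤ (exp 1 * B / R) ^ (2 * R) * (exp 1 * B / R) ^ R * (exp 1 * B / R) ^ R := by
        gcongr
    _ = ((exp 1 * B / R) ^ R) ^ 4 := by ring

-- Replaces the monotonicity of `r ↦ r * log (a / r)` on `(0, a / e]`, at the cost of a
-- factor `e`.
theorem mul_log_div_le {r x a : ℝ} (hr : 0 < r) (hrx : r ≤ x) (hxa : x ≤ a) :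
    r * log (a / r) ≤ x * log (exp 1 * a / x) := by
  have hx : 0 < x := hr.trans_le hrx
  have ha : 0 < a := hx.trans_le hxa
  have hsplit : log (a / r) = log (a / x) + log (x / r) := by
    rw [← log_mul (by positivity) (by positivity)]; field_simp
  have hlog : log (x / r) ≤ x / r - 1 := log_le_sub_one_of_pos (by positivity)
  have hax : 0 ≤ log (a / x) := log_nonneg (by rw [le_div_iff₀ hx]; linarith)
  have hexp : log (exp 1 * a / x) = 1 + log (a / x) := by
    rw [mul_div_assoc, log_mul (exp_ne_zero 1) (by positivity), log_exp]
  rw [hsplit, hexp]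
  have : r * log (x / r) ≤ x - r := by
    calc r * log (x / r) ≤ r * (x / r - 1) := by gcongr
      _ = x - r := by field_simp
  nlinarith

theorem choose_mul_choose_mul_two_pow_le_exp {B R : ℕ} {x : ℝ} (hRx : (R : ℝ) ≤ x)
    (hxB : x ≤ B) :
    ((B + R).choose (B - R) * B.choose R * 2 ^ R : ℝ) ≤
      exp (4 * (x * log (exp 1 * (exp 1 * B) / x))) := by
  rcases R.eq_zero_or_pos with rfl | hR
  · rw [Nat.cast_zero] at hRx
    rcases hRx.eq_or_lt with hx | hx
    · simp [← hx]
    have hxB' : 1 ≤ exp 1 * (exp 1 * B) / x := by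
      have he : 1 ≤ exp 1 := one_le_exp zero_le_one
      have hB : (0 : ℝ) ≤ B := hx.le.trans hxB
      rw [le_div_iff₀ hx, one_mul]
      nlinarith [mul_le_mul he he zero_le_one (exp_pos 1).le]
    simpa using mul_nonneg hx.le (log_nonneg hxB')
  have hR' : (0 : ℝ) < R := by exact_mod_cast hR
  have hRB : R ≤ B := by exact_mod_cast hRx.trans hxB
  have hB : (0 : ℝ) < B := hR'.trans_le (hRx.trans hxB)
  calc _ ≤ ((exp 1 * B / R) ^ R) ^ 4 := choose_mul_choose_mul_two_pow_le hR hRB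
    _ = exp (4 * (R * log (exp 1 * B / R))) := by
      conv_lhs => rw [← exp_log (show 0 < exp 1 * B / R by positivity)]
      rw [← exp_nat_mul, ← exp_nat_mul]
      push_cast; ring_nf
    _ ≤ _ := exp_le_exp.2 (mul_le_mul_of_nonneg_left
        (mul_log_div_le hR' hRx (by nlinarith [add_one_le_exp (1 : ℝ)])) (by norm_num))

theorem log_two_le_log_one_div {p : ℝ} (hp0 : 0 < p) (hp2 : p < 1 / 2) : log 2 ≤ log (1 / p) :=
  log_le_log two_pos (by rw [le_div_iff₀ hp0]; linarith)

theorem choose_mul_choose_mul_two_pow_le_exp_mul_half {p : ℝ} (hp0 : 0 < p) (hp2 : p < 1 / 2)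
    {B R : ℕ} (hR : (R : ℝ) ≤ p * B / 2 / (512 * log (1 / p))) :
    ((B + R).choose (B - R) * B.choose R * 2 ^ R : ℝ) ≤ exp (p * B / 2) := by
  have hL2 := log_two_le_log_one_div hp0 hp2
  have hL : 1 / 2 ≤ log (1 / p) := by linarith [log_two_gt_d9]
  have hB : (0 : ℝ) ≤ B := Nat.cast_nonneg B
  have hxB : p * B / 2 / (512 * log (1 / p)) ≤ B := by
    rw [div_le_iff₀ (by positivity)]
    nlinarith [mul_nonneg hp0.le hB]
  refine (choose_mul_choose_mul_two_pow_le_exp hR hxB).trans (exp_le_exp.2 ?_)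
  rcases hB.eq_or_lt with hB | hB
  · simp [← hB]
  have hlog : log (exp 1 * (exp 1 * B) / (p * B / 2 / (512 * log (1 / p)))) ≤
      14 * log (1 / p) := by
    have hy : exp 1 * (exp 1 * B) / (p * B / 2 / (512 * log (1 / p))) =
        exp 2 * (2 ^ 10 * log (1 / p) * (1 / p)) := by
      rw [show exp 2 = exp 1 * exp 1 by rw [← exp_add]; norm_num]
      field_simp; ring
    rw [hy, log_mul (exp_ne_zero 2) (by positivity), log_exp,
      log_mul (by positivity) (by positivity), log_mul (by positivity) (by positivity), log_pow]
    linarith [log_le_sub_one_of_pos (show 0 < log (1 / p) by linarith)]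
  calc 4 * (p * B / 2 / (512 * log (1 / p)) *
        log (exp 1 * (exp 1 * B) / (p * B / 2 / (512 * log (1 / p)))))
      ≤ 4 * (p * B / 2 / (512 * log (1 / p)) * (14 * log (1 / p))) := by gcongr
    _ ≤ p * B / 2 := by
      field_simp
      nlinarith [mul_pos hp0 hB]

theorem sum_sum_prod_le_card_mul_pow {X α : Type*} {B : ℕ} (S : Finset X) {P : α → X → ℝ}
    {Q : X → ℝ}
    (hP : ∀ a x, 0 ≤ P a x) (hPQ : ∀ a x, P a x ≤ Q x) (hQ : ∀ x, 0 ≤ Q x)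
    (N : (Fin B → X) → Finset (Fin B → α)) {K : ℕ} (hN : ∀ s, #(N s) ≤ K) :
    ∑ s ∈ Fintype.piFinset (fun _ => S), ∑ z ∈ N s, ∏ b, P (z b) (s b) ≤
      K * (∑ x ∈ S, Q x) ^ B := by
  calc ∑ s ∈ Fintype.piFinset (fun _ => S), ∑ z ∈ N s, ∏ b, P (z b) (s b)
      ≤ ∑ s ∈ Fintype.piFinset (fun _ => S), K * ∏ b, Q (s b) := by
        refine sum_le_sum fun s _ => ?_
        calc ∑ z ∈ N s, ∏ b, P (z b) (s b) ≤ ∑ z ∈ N s, ∏ b, Q (s b) :=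
              sum_le_sum fun z _ => prod_le_prod (fun b _ => hP _ _) fun b _ => hPQ _ _
          _ = #(N s) * ∏ b, Q (s b) := by rw [sum_const, nsmul_eq_mul]
          _ ≤ K * ∏ b, Q (s b) := by gcongr; exacts [prod_nonneg fun b _ => hQ _, hN s]
    _ = K * (∑ x ∈ S, Q x) ^ B := by
      rw [← mul_sum, ← prod_univ_sum, prod_const, card_univ, Fintype.card_fin]

theorem mul_sub_sum_filter_le_sum_mul {ι : Type*} (I : Finset ι) {w : ι → ℝ}
    (hw : ∀ i, 0 ≤ w i) (d : ι → ℕ) (R : ℕ) :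
    (R + 1) * (∑ i ∈ I, w i - ∑ i ∈ I with d i ≤ R, w i) ≤ ∑ i ∈ I, w i * d i := by
  rw [← sum_filter_add_sum_filter_not I (d · ≤ R), add_sub_cancel_left, mul_sum]
  calc ∑ i ∈ I with ¬d i ≤ R, (R + 1 : ℝ) * w i
      ≤ ∑ i ∈ I with ¬d i ≤ R, w i * d i :=
        sum_le_sum fun i hi => by
          have : (R + 1 : ℝ) ≤ d i := by
            exact_mod_cast Nat.succ_le_of_lt (not_le.1 (mem_filter.1 hi).2)
          nlinarith [hw i]
    _ ≤ ∑ i ∈ I, w i * d i :=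
        sum_le_sum_of_subset_of_nonneg (filter_subset _ _) fun i _ _ =>
          mul_nonneg (hw i) (Nat.cast_nonneg _)

theorem div_two_mul_le_floor_add_one_mul {t a : ℝ} (ht : 0 ≤ t) (ha : 1 ≤ a) :
    t / (2 * a) ≤ (⌊t / a⌋₊ + 1) * (1 - exp (-t)) := by
  have ha0 : 0 < a := by linarith
  have h1 : t / (1 + t) ≤ 1 - exp (-t) := by
    have : exp (-t) ≤ 1 / (1 + t) := by
      rw [exp_neg, ← one_div]
      exact one_div_le_one_div_of_le (by linarith) (by linarith [add_one_le_exp t])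
    have : 1 - 1 / (1 + t) = t / (1 + t) := by field_simp; ring
    linarith
  have h2 : (1 + t) / (2 * a) ≤ ⌊t / a⌋₊ + 1 := by
    have hfl : t / a < ⌊t / a⌋₊ + 1 := Nat.lt_floor_add_one _
    have : (1 + t) / (2 * a) ≤ (1 + t / a) / 2 := by
      rw [div_le_div_iff₀ (by positivity) (by norm_num)]
      field_simp
      nlinarith
    have : (0 : ℝ) ≤ ⌊t / a⌋₊ := Nat.cast_nonneg _
    linarith
  calc t / (2 * a) = (1 + t) / (2 * a) * (t / (1 + t)) := by field_simp
    _ ≤ (⌊t / a⌋₊ + 1) * (1 - exp (-t)) := by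
      gcongr

theorem sum_sum_filter_editDist_le {X : Type*} (S : Finset X) {P : Bool → X → ℝ}
    (hP : ∀ b x, 0 ≤ P b x) {p : ℝ} (hp0 : 0 < p) (hp2 : p < 1 / 2)
    (hmax : ∑ x ∈ S, max (P false x) (P true x) ≤ 2 * (1 - p)) {B R : ℕ}
    (hR : (R : ℝ) ≤ p * B / 2 / (512 * log (1 / p))) (dec : (Fin B → X) → List Bool) :
    ∑ s ∈ Fintype.piFinset (fun _ => S), ∑ z with editDist (List.ofFn z) (dec s) ≤ R,
      ∏ b, P (z b) (s b) ≤ 2 ^ B * exp (-(p * B / 2)) := by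
  have hRB : R ≤ B := by
    have : p * B / 2 / (512 * log (1 / p)) ≤ B := by
      rw [div_le_iff₀ (by linarith [log_two_le_log_one_div hp0 hp2, log_two_gt_d9])]
      nlinarith [log_two_le_log_one_div hp0 hp2, log_two_gt_d9,
        mul_nonneg hp0.le (Nat.cast_nonneg B : (0 : ℝ) ≤ B)]
    exact_mod_cast hR.trans this
  have hmax0 : 0 ≤ ∑ x ∈ S, max (P false x) (P true x) :=
    sum_nonneg fun x _ => le_max_of_le_left (hP _ _)
  calc _ ≤ ((B + R).choose (B - R) * B.choose R * 2 ^ R : ℕ) *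
        (∑ x ∈ S, max (P false x) (P true x)) ^ B :=
        sum_sum_prod_le_card_mul_pow S (Q := fun x => max (P false x) (P true x)) hP
          (fun b x => by cases b; exacts [le_max_left _ _, le_max_right _ _])
          (fun x => le_max_of_le_left (hP _ _)) _ fun s => card_editBall_le (dec s) hRB
    _ ≤ exp (p * B / 2) * (2 * exp (-p)) ^ B := by
        push_cast
        exact mul_le_mul (choose_mul_choose_mul_two_pow_le_exp_mul_half hp0 hp2 hR)
          (pow_le_pow_left₀ hmax0 (hmax.trans (by linarith [one_sub_le_exp_neg p])) B)
          (pow_nonneg hmax0 B) (exp_pos _).le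
    _ = 2 ^ B * exp (-(p * B / 2)) := by
        rw [mul_pow, ← exp_nat_mul, mul_left_comm, ← exp_add]
        ring_nf

theorem le_expected_editDist {X : Type*} (S : Finset X) {P : Bool → X → ℝ}
    (hP : ∀ b x, 0 ≤ P b x) (hP1 : ∀ b, ∑ x ∈ S, P b x = 1) {p : ℝ} (hp0 : 0 < p)
    (hp2 : p < 1 / 2) (hmax : ∑ x ∈ S, max (P false x) (P true x) ≤ 2 * (1 - p)) {B : ℕ}
    (dec : (Fin B → X) → List Bool) :
    1 / 2048 * B * p / log (1 / p) ≤ ((2 : ℝ) ^ B)⁻¹ *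
      ∑ s ∈ Fintype.piFinset (fun _ => S), ∑ z : Fin B → Bool,
        (∏ b, P (z b) (s b)) * (editDist (List.ofFn z) (dec s) : ℝ) := by
  set R := ⌊p * B / 2 / (512 * log (1 / p))⌋₊
  have hL : 1 ≤ 512 * log (1 / p) := by
    linarith [log_two_le_log_one_div hp0 hp2, log_two_gt_d9]
  have ht : 0 ≤ p * B / 2 := by positivity
  have hmass := sum_sum_filter_editDist_le S hP hp0 hp2 hmax (Nat.floor_le (by positivity)) dec
  set W : (Fin B → X) → (Fin B → Bool) → ℝ := fun s z => ∏ b, P (z b) (s b)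
  have htotal : ∑ s ∈ Fintype.piFinset (fun _ => S), ∑ z, W s z = 2 ^ B := by
    rw [sum_comm]
    simp [W, ← prod_univ_sum, hP1]
  rw [le_inv_mul_iff₀ (by positivity)]
  calc 2 ^ B * (1 / 2048 * B * p / log (1 / p))
      = 2 ^ B * (p * B / 2 / (2 * (512 * log (1 / p)))) := by ring
    _ ≤ 2 ^ B * ((R + 1) * (1 - exp (-(p * B / 2)))) :=
        mul_le_mul_of_nonneg_left (div_two_mul_le_floor_add_one_mul ht hL) (by positivity)
    _ = (R + 1) * (2 ^ B - 2 ^ B * exp (-(p * B / 2))) := by ring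
    _ ≤ (R + 1) * ∑ s ∈ Fintype.piFinset (fun _ => S),
          (∑ z, W s z - ∑ z with editDist (List.ofFn z) (dec s) ≤ R, W s z) := by
        rw [sum_sub_distrib, htotal]
        gcongr
    _ ≤ ∑ s ∈ Fintype.piFinset (fun _ => S),
          ∑ z, W s z * (editDist (List.ofFn z) (dec s) : ℝ) := by
        rw [mul_sum]
        exact sum_le_sum fun s _ => mul_sub_sum_filter_le_sum_mul univ
          (fun z => prod_nonneg fun b _ => hP _ _) _ R

/-- there is an absolute constant c' > 0 such that if every
M-sample algorithm for the atomic problem fails with probability at least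
p ∈ (0, 1/2), then for uniformly random z ∈ {0,1}^B any algorithm receiving
M samples from D_z and outputting ẑ ∈ {0,1}^* has expected edit distance
E[d_edit(z, ẑ)] ≥ c'·B·p/log(1/p). -/
theorem stmt8 :
    ∃ c' : ℝ, 0 < c' ∧
      ∀ (δ : ℝ) (M B : ℕ) (p : ℝ), 0 < δ → δ < 1 → 0 < p → p < 1 / 2 →
        (∀ A : (Fin M → ℕ × ℕ) → Bool, p ≤ failProb δ M A) →
        ∀ Ahat : (Fin M → Fin B → ℕ × ℕ) → List Bool,
          c' * B * p / Real.log (1 / p) ≤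
            ((2 : ℝ) ^ B)⁻¹ * ∑ z : Fin B → Bool, ∑' s : Fin M → Fin B → ℕ × ℕ,
              (∏ m, ∏ b, atomD δ M (z b) (s m b))
                * (editDist (List.ofFn z) (Ahat s) : ℝ) := by
  refine ⟨1 / 2048, by norm_num, fun δ M B p hδ0 hδ1 hp0 hp2 hp Ahat => ?_⟩
  simp only [tsum_prod_prod_atomD_mul]
  rw [sum_comm]
  exact le_expected_editDist (sampleBox M) (sampleD_nonneg hδ0.le hδ1.le) sum_sampleBox_sampleD
    hp0 hp2 (sum_max_sampleD_le hp) _
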